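/- If the graph H obtained from a 3-regular graph G on 2n vertices by the triangle-copy construction has a bisection in which each of the two sets contains at most K bridge vertices, then G has a bisection of size at most K. -/

import Mathlib

open scoped Classical

/-- The triangle-copy construction: the graph `H` on `V × Fin 3` in which the
three copies of every vertex are mutually adjacent, and for every edge
`{u, v}` of `G` there is exactly one inter-copy edge, joining `(u, c u v)` to
`(v, c v u)`, where `c` is the copy-assignment function. -/
def HGraph {V : Type*} (G : SimpleGraph V) (c : V → V → Fin 3) :
    SimpleGraph (V × Fin 3) where
  Adj a b :=
    (a.1 = b.1 ∧ a.2 ≠ b.2) ∨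
    (G.Adj a.1 b.1 ∧ a.2 = c a.1 b.1 ∧ b.2 = c b.1 a.1)
  symm := by
    refine ⟨?_⟩
    rintro ⟨v, i⟩ ⟨w, j⟩ (⟨h1, h2⟩ | ⟨h1, h2, h3⟩)
    · exact Or.inl ⟨h1.symm, h2.symm⟩
    · exact Or.inr ⟨h1.symm, h3, h2⟩
  loopless := by
    refine ⟨?_⟩
    rintro ⟨v, i⟩ (⟨_, h2⟩ | ⟨h1, _, _⟩)
    · exact h2 rfl
    · exact G.loopless.irrefl v h1

/-- The condition that the copy-assignment function `c` assigns, for every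
edge `{u,v}` of `G`, the single inter-copy edge of `H` in such a way that
every copy of every vertex is incident to at most one inter-copy edge. -/
def GoodAssignment {V : Type*} (G : SimpleGraph V) (c : V → V → Fin 3) : Prop :=
  ∀ u v w, G.Adj u v → G.Adj u w → v ≠ w → c u v ≠ c u w

/-- The size of the bisection `(A, B)` with respect to the adjacency relation
`Adj`: the number of edges with one endpoint in each set (counted as ordered
pairs `(a, b) ∈ A × B`, which is the same number when `A` and `B` are
disjoint). -/
noncomputable def crossSize {α : Type*} (Adj : α → α → Prop)
    (A B : Finset α) : ℕ :=
  ((A ×ˢ B).filter fun ab => Adj ab.1 ab.2).card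

/-- The number of bridge vertices of `A` in the bisection `(A, B)`: vertices
of `A` having at least one neighbor in `B`. -/
noncomputable def bridgeCount {α : Type*} (Adj : α → α → Prop)
    (A B : Finset α) : ℕ :=
  (A.filter fun a => ∃ b ∈ B, Adj a b).card

lemma crossSize_comm {V : Type*} (G : SimpleGraph V) (A B : Finset V) :
    crossSize G.Adj A B = crossSize G.Adj B A := by
  unfold crossSize
  refine Finset.card_bij' (fun p _ => (p.2, p.1)) (fun p _ => (p.2, p.1)) ?_ ?_ ?_ ?_
  · intro p hp
    simp only [Finset.mem_filter, Finset.mem_product] at hp ⊢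
    exact ⟨⟨hp.1.2, hp.1.1⟩, hp.2.symm⟩
  · intro p hp
    simp only [Finset.mem_filter, Finset.mem_product] at hp ⊢
    exact ⟨⟨hp.1.2, hp.1.1⟩, hp.2.symm⟩
  · intro p _; rfl
  · intro p _; rfl

lemma main_count {V : Type*} [Fintype V] [DecidableEq V]
    (G : SimpleGraph V) [DecidableRel G.Adj]
    (c : V → V → Fin 3) (hc : GoodAssignment G c)
    (U₁ U₂ : Finset (V × Fin 3))
    (hdisj : Disjoint U₁ U₂) (huniv : U₁ ∪ U₂ = Finset.univ)
    (V₁ V₂ : Finset V) (hV : Disjoint V₁ V₂)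
    (h2 : ∀ v ∈ V₂, ∃ i, (v, i) ∈ U₂)
    (h3 : ∀ v ∈ V₁, (∃ i, (v, i) ∈ U₂) →
      (Finset.univ.filter fun z => G.Adj v z ∧ (z, c z v) ∈ U₂).card ≤
      (Finset.univ.filter fun i : Fin 3 => (v, i) ∈ U₁).card) :
    crossSize G.Adj V₁ V₂ ≤ bridgeCount (HGraph G c).Adj U₁ U₂ := by
  classical
  have hmem : ∀ x : V × Fin 3, x ∈ U₂ ↔ x ∉ U₁ := by
    intro x
    constructor
    · intro h2x h1x; exact (Finset.disjoint_left.1 hdisj) h1x h2x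
    · intro h1x
      have hx : x ∈ U₁ ∪ U₂ := huniv ▸ Finset.mem_univ x
      rcases Finset.mem_union.1 hx with h | h
      · exact absurd h h1x
      · exact h
  set CP := ((V₁ ×ˢ V₂).filter fun ab => G.Adj ab.1 ab.2) with hCPdef
  set BR := (U₁.filter fun a => ∃ b ∈ U₂, (HGraph G c).Adj a b) with hBRdef
  have eCP : crossSize G.Adj V₁ V₂ = CP.card := by
    unfold crossSize
    rw [hCPdef]
    congr
  have eBR : bridgeCount (HGraph G c).Adj U₁ U₂ = BR.card := by
    unfold bridgeCount
    rw [hBRdef]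
  rw [eCP, eBR]
  have hCP : ∀ p ∈ CP, p.1 ∈ V₁ ∧ p.2 ∈ V₂ ∧ G.Adj p.1 p.2 := by
    intro p hp
    simp only [hCPdef, Finset.mem_filter, Finset.mem_product] at hp
    exact ⟨hp.1.1, hp.1.2, hp.2⟩
  have hφ : ∀ p ∈ CP, (if (p.2, c p.2 p.1) ∈ U₁ then p.2 else p.1)
      ∈ (Finset.univ : Finset V) := fun _ _ => Finset.mem_univ _
  have hψ : ∀ x ∈ BR, x.1 ∈ (Finset.univ : Finset V) := fun _ _ => Finset.mem_univ _
  rw [Finset.card_eq_sum_card_fiberwise hφ, Finset.card_eq_sum_card_fiberwise hψ]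
  apply Finset.sum_le_sum
  intro v _
  by_cases hv1 : v ∈ V₁
  · -- every p in the fiber has p.1 = v and (p.2, c p.2 v) ∈ U₂
    have key : ∀ p ∈ CP.filter (fun p => (if (p.2, c p.2 p.1) ∈ U₁ then p.2 else p.1) = v),
        p.1 = v ∧ (p.2, c p.2 p.1) ∈ U₂ := by
      intro p hp
      rw [Finset.mem_filter] at hp
      obtain ⟨hpCP, hpv⟩ := hp
      by_cases hq : (p.2, c p.2 p.1) ∈ U₁
      · rw [if_pos hq] at hpv
        exact absurd hv1 (Finset.disjoint_right.1 hV (hpv ▸ (hCP p hpCP).2.1))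
      · rw [if_neg hq] at hpv
        exact ⟨hpv, (hmem _).2 hq⟩
    by_cases hall : ∃ i, (v, i) ∈ U₂
    · -- split case: fiber ≤ N₂ v ≤ a v ≤ bridge fiber
      have step1 : (CP.filter (fun p => (if (p.2, c p.2 p.1) ∈ U₁ then p.2 else p.1) = v)).card
          ≤ (Finset.univ.filter fun z => G.Adj v z ∧ (z, c z v) ∈ U₂).card := by
        apply Finset.card_le_card_of_injOn (fun p => p.2)
        · intro p hp
          obtain ⟨h1, h2'⟩ := key p hp
          have hadj := (hCP p (Finset.mem_filter.1 hp).1).2.2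
          rw [Finset.mem_coe, Finset.mem_filter]
          exact ⟨Finset.mem_univ _, h1 ▸ hadj, h1 ▸ h2'⟩
        · intro p hp q hq h
          have := (key p hp).1
          have := (key q hq).1
          exact Prod.ext ((key p hp).1.trans (key q hq).1.symm) h
      have step3 : (Finset.univ.filter fun i : Fin 3 => (v, i) ∈ U₁).card
          ≤ (BR.filter (fun x => x.1 = v)).card := by
        obtain ⟨i₀, hi₀⟩ := hall
        apply Finset.card_le_card_of_injOn (fun i => (v, i))
        · intro i hi
          rw [Finset.mem_coe, Finset.mem_filter] at hi ⊢
          refine ⟨Finset.mem_filter.2 ⟨hi.2, ⟨(v, i₀), hi₀, Or.inl ⟨rfl, ?_⟩⟩⟩, rfl⟩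
          intro h
          have h' : i = i₀ := h
          exact (hmem _).1 hi₀ (h' ▸ hi.2)
        · intro i _ j _ h
          exact congrArg Prod.snd h
      exact le_trans step1 (le_trans (h3 v hv1 hall) step3)
    · -- all copies in U₁
      push_neg at hall
      have hall1 : ∀ i, (v, i) ∈ U₁ := by
        intro i
        by_contra h
        exact hall i ((hmem _).2 h)
      apply Finset.card_le_card_of_injOn (fun p => (v, c v p.2))
      · intro p hp
        obtain ⟨h1, h2'⟩ := key p hp
        have hadj := (hCP p (Finset.mem_filter.1 hp).1).2.2
        rw [h1] at hadj h2'
        rw [Finset.mem_coe, Finset.mem_filter]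
        exact ⟨Finset.mem_filter.2 ⟨hall1 _, ⟨(p.2, c p.2 v), h2', Or.inr ⟨hadj, rfl, rfl⟩⟩⟩, rfl⟩
      · intro p hp q hq h
        have hp1 := (key p hp).1
        have hq1 := (key q hq).1
        have hadjp := (hCP p (Finset.mem_filter.1 hp).1).2.2
        have hadjq := (hCP q (Finset.mem_filter.1 hq).1).2.2
        rw [hp1] at hadjp
        rw [hq1] at hadjq
        have h2' : c v p.2 = c v q.2 := congrArg Prod.snd h
        have : p.2 = q.2 := by
          by_contra hne
          exact hc v p.2 q.2 hadjp hadjq hne h2'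
        exact Prod.ext (hp1.trans hq1.symm) this
  · -- v ∉ V₁
    by_cases hv2 : v ∈ V₂
    · have key : ∀ p ∈ CP.filter (fun p => (if (p.2, c p.2 p.1) ∈ U₁ then p.2 else p.1) = v),
          p.2 = v ∧ (v, c v p.1) ∈ U₁ := by
        intro p hp
        rw [Finset.mem_filter] at hp
        obtain ⟨hpCP, hpv⟩ := hp
        by_cases hq : (p.2, c p.2 p.1) ∈ U₁
        · rw [if_pos hq] at hpv
          refine ⟨hpv, ?_⟩
          rw [← hpv]; exact hq
        · rw [if_neg hq] at hpv
          exact absurd (hpv ▸ (hCP p hpCP).1) hv1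
      apply Finset.card_le_card_of_injOn (fun p => (v, c v p.1))
      · intro p hp
        obtain ⟨h1, h2'⟩ := key p hp
        obtain ⟨i₀, hi₀⟩ := h2 v hv2
        rw [Finset.mem_coe, Finset.mem_filter]
        refine ⟨Finset.mem_filter.2 ⟨h2', ⟨(v, i₀), hi₀, Or.inl ⟨rfl, ?_⟩⟩⟩, rfl⟩
        intro h
        have h' : c v p.1 = i₀ := h
        exact (hmem _).1 hi₀ (h' ▸ h2')
      · intro p hp q hq h
        have hp2 := (key p hp).1
        have hq2 := (key q hq).1
        have hadjp := G.adj_symm (hCP p (Finset.mem_filter.1 hp).1).2.2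
        have hadjq := G.adj_symm (hCP q (Finset.mem_filter.1 hq).1).2.2
        rw [hp2] at hadjp
        rw [hq2] at hadjq
        have h2' : c v p.1 = c v q.1 := congrArg Prod.snd h
        have : p.1 = q.1 := by
          by_contra hne
          exact hc v p.1 q.1 hadjp hadjq hne h2'
        exact Prod.ext this (hp2.trans hq2.symm)
    · have : CP.filter (fun p => (if (p.2, c p.2 p.1) ∈ U₁ then p.2 else p.1) = v) = ∅ := by
        apply Finset.eq_empty_of_forall_notMem
        intro p hp
        rw [Finset.mem_filter] at hp
        obtain ⟨hpCP, hpv⟩ := hp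
        by_cases hq : (p.2, c p.2 p.1) ∈ U₁
        · rw [if_pos hq] at hpv
          exact hv2 (hpv ▸ (hCP p hpCP).2.1)
        · rw [if_neg hq] at hpv
          exact hv1 (hpv ▸ (hCP p hpCP).1)
      simp [this]

/-- If the graph `H` obtained from a 3-regular graph `G` on
`2n` vertices by the triangle-copy construction has a bisection in which each
of the two sets contains at most `K` bridge vertices, then `G` has a
bisection of size at most `K`. -/
theorem min_bridge_bisection_to_bisection
    {V : Type*} [Fintype V] [DecidableEq V]
    (n K : ℕ)
    (G : SimpleGraph V) [DecidableRel G.Adj]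
    (hcard : Fintype.card V = 2 * n)
    (hreg : ∀ v, G.degree v = 3)
    (c : V → V → Fin 3) (hc : GoodAssignment G c)
    (U₁ U₂ : Finset (V × Fin 3))
    (hdisj : Disjoint U₁ U₂) (huniv : U₁ ∪ U₂ = Finset.univ)
    (hU₁ : U₁.card = 3 * n) (hU₂ : U₂.card = 3 * n)
    (hb₁ : bridgeCount (HGraph G c).Adj U₁ U₂ ≤ K)
    (hb₂ : bridgeCount (HGraph G c).Adj U₂ U₁ ≤ K) :
    ∃ V₁ V₂ : Finset V,
      Disjoint V₁ V₂ ∧ V₁ ∪ V₂ = Finset.univ ∧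
      V₁.card = n ∧ V₂.card = n ∧
      crossSize G.Adj V₁ V₂ ≤ K := by
  classical
  have hmem : ∀ x : V × Fin 3, x ∈ U₂ ↔ x ∉ U₁ := by
    intro x
    constructor
    · intro h2x h1x; exact (Finset.disjoint_left.1 hdisj) h1x h2x
    · intro h1x
      have hx : x ∈ U₁ ∪ U₂ := huniv ▸ Finset.mem_univ x
      rcases Finset.mem_union.1 hx with h | h
      · exact absurd h h1x
      · exact h
  set a : V → ℕ := fun v => (Finset.univ.filter fun i : Fin 3 => (v, i) ∈ U₁).card with hadef
  have ha3 : ∀ v, a v ≤ 3 := by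
    intro v
    calc a v ≤ (Finset.univ : Finset (Fin 3)).card := Finset.card_filter_le _ _
      _ = 3 := by simp
  have haU₂ : ∀ v, (Finset.univ.filter fun i : Fin 3 => (v, i) ∈ U₂).card = 3 - a v := by
    intro v
    have h1 : (Finset.univ.filter fun i : Fin 3 => (v, i) ∈ U₂)
        = Finset.univ \ (Finset.univ.filter fun i : Fin 3 => (v, i) ∈ U₁) := by
      ext i
      simp [hmem]
    rw [h1, Finset.card_sdiff_of_subset (Finset.filter_subset _ _)]
    have h2 : (Finset.univ.filter fun i : Fin 3 => (v, i) ∈ U₁).card = a v := rfl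
    rw [h2, Finset.card_univ]
    simp
  -- the two "direction counts"
  set N₁ : V → ℕ := fun v =>
    (Finset.univ.filter fun z => G.Adj v z ∧ (z, c z v) ∈ U₁).card with hN₁def
  set N₂ : V → ℕ := fun v =>
    (Finset.univ.filter fun z => G.Adj v z ∧ (z, c z v) ∈ U₂).card with hN₂def
  have hdeg : ∀ v, N₁ v + N₂ v = 3 := by
    intro v
    have e1 : (Finset.univ.filter fun z => G.Adj v z ∧ (z, c z v) ∈ U₁)
        = (Finset.univ.filter fun z => G.Adj v z).filter (fun z => (z, c z v) ∈ U₁) := by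
      rw [Finset.filter_filter]
    have e2 : (Finset.univ.filter fun z => G.Adj v z ∧ (z, c z v) ∈ U₂)
        = (Finset.univ.filter fun z => G.Adj v z).filter (fun z => ¬ ((z, c z v) ∈ U₁)) := by
      rw [Finset.filter_filter]
      apply Finset.filter_congr
      intro z _
      simp [hmem]
    have h2 := Finset.card_filter_add_card_filter_not
      (s := (Finset.univ.filter fun z => G.Adj v z)) (p := fun z => (z, c z v) ∈ U₁)
    have hdval : (Finset.univ.filter fun z => G.Adj v z).card = 3 := by
      rw [← SimpleGraph.neighborFinset_eq_filter]
      exact hreg v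
    rw [hdval] at h2
    rw [hN₁def, hN₂def]
    simp only
    rw [e1, e2]
    omega
  -- sum of a over all vertices
  have hfib : ∀ v, (U₁.filter fun x => x.1 = v).card = a v := by
    intro v
    rw [hadef]
    simp only
    refine Finset.card_bij' (fun x _ => x.2) (fun i _ => (v, i)) ?_ ?_ ?_ ?_
    · intro x hx
      rw [Finset.mem_filter] at hx
      rw [Finset.mem_filter]
      refine ⟨Finset.mem_univ _, ?_⟩
      have : ((v, x.2) : V × Fin 3) = x := Prod.ext hx.2.symm rfl
      rw [this]
      exact hx.1
    · intro i hi
      rw [Finset.mem_filter] at hi ⊢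
      exact ⟨hi.2, rfl⟩
    · intro x hx
      exact Prod.ext ((Finset.mem_filter.1 hx).2).symm rfl
    · intro i _
      rfl
  have hsum : ∑ v, a v = 3 * n := by
    have h1 := Finset.card_eq_sum_card_fiberwise
      (f := Prod.fst) (s := U₁) (t := (Finset.univ : Finset V))
      (fun x _ => Finset.mem_univ _)
    rw [hU₁] at h1
    have h2 : ∑ v, a v = ∑ v : V, (U₁.filter fun x => x.1 = v).card :=
      Finset.sum_congr rfl (fun v _ => (hfib v).symm)
    rw [h2]
    exact h1.symm
  set A := Finset.univ.filter (fun v => a v = 3) with hAdef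
  set S := Finset.univ.filter (fun v => a v ≠ 0 ∧ a v ≠ 3) with hSdef
  have hA3 : ∑ v ∈ A, a v = 3 * A.card := by
    rw [Finset.sum_congr rfl (fun v hv => (Finset.mem_filter.1 hv).2)]
    rw [Finset.sum_const, smul_eq_mul, mul_comm]
  have hAn : A.card ≤ n := by
    have h1 : ∑ v ∈ A, a v ≤ ∑ v, a v :=
      Finset.sum_le_sum_of_subset (Finset.subset_univ _)
    omega
  have hsplit : ∑ v ∈ A, a v + ∑ v ∈ Finset.univ.filter (fun v => ¬ (a v = 3)), a v
      = ∑ v, a v := Finset.sum_filter_add_sum_filter_not _ _ _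
  have hSsum : ∑ v ∈ Finset.univ.filter (fun v => ¬ (a v = 3)), a v = ∑ v ∈ S, a v := by
    symm
    apply Finset.sum_subset
    · intro v hv
      rw [Finset.mem_filter] at hv ⊢
      exact ⟨hv.1, hv.2.2⟩
    · intro v hv hvs
      rw [Finset.mem_filter] at hv hvs
      by_contra h
      exact hvs ⟨Finset.mem_univ _, h, hv.2⟩
  have hS2 : ∑ v ∈ S, a v ≤ 2 * S.card := by
    calc ∑ v ∈ S, a v ≤ ∑ _v ∈ S, 2 := by
          apply Finset.sum_le_sum
          intro v hv
          have := (Finset.mem_filter.1 hv).2.2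
          have := ha3 v
          omega
      _ = 2 * S.card := by simp [mul_comm]
  have hmS : n - A.card ≤ S.card := by omega
  have hexU₂ : ∀ v, a v ≠ 3 → ∃ i, (v, i) ∈ U₂ := by
    intro v h
    have h1 := haU₂ v
    have h2 := ha3 v
    have h3 : (Finset.univ.filter fun i : Fin 3 => (v, i) ∈ U₂).card ≠ 0 := by omega
    obtain ⟨i, hi⟩ := Finset.card_ne_zero.1 h3
    exact ⟨i, (Finset.mem_filter.1 hi).2⟩
  have hexU₁ : ∀ v, a v ≠ 0 → ∃ i, (v, i) ∈ U₁ := by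
    intro v h
    rw [hadef] at h
    simp only at h
    obtain ⟨i, hi⟩ := Finset.card_ne_zero.1 h
    exact ⟨i, (Finset.mem_filter.1 hi).2⟩
  have hnotsplit : ∀ v, (∃ i, (v, i) ∈ U₂) → a v ≠ 3 := by
    intro v ⟨i, hi⟩ h3'
    have h1 := haU₂ v
    rw [h3'] at h1
    simp only [Nat.sub_self] at h1
    rw [Finset.card_eq_zero] at h1
    have : i ∈ Finset.univ.filter fun i : Fin 3 => (v, i) ∈ U₂ :=
      Finset.mem_filter.2 ⟨Finset.mem_univ _, hi⟩
    rw [h1] at this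
    exact Finset.notMem_empty i this
  have hnotfull : ∀ v, (∃ i, (v, i) ∈ U₁) → a v ≠ 0 := by
    intro v ⟨i, hi⟩ h0
    rw [hadef] at h0
    simp only at h0
    rw [Finset.card_eq_zero] at h0
    have : i ∈ Finset.univ.filter fun i : Fin 3 => (v, i) ∈ U₁ :=
      Finset.mem_filter.2 ⟨Finset.mem_univ _, hi⟩
    rw [h0] at this
    exact Finset.notMem_empty i this
  set P := S.filter (fun v => N₂ v ≤ a v) with hPdef
  by_cases hbr : n - A.card ≤ P.card
  · obtain ⟨S₁, hS₁P, hS₁card⟩ := Finset.exists_subset_card_eq hbr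
    have hS₁S : S₁ ⊆ S := hS₁P.trans (Finset.filter_subset _ _)
    have hAS₁ : Disjoint A S₁ := by
      rw [Finset.disjoint_left]
      intro v hvA hvS₁
      exact ((Finset.mem_filter.1 (hS₁S hvS₁)).2.2) ((Finset.mem_filter.1 hvA).2)
    refine ⟨A ∪ S₁, Finset.univ \ (A ∪ S₁), Finset.disjoint_sdiff,
      Finset.union_sdiff_of_subset (Finset.subset_univ _), ?_, ?_, ?_⟩
    · rw [Finset.card_union_of_disjoint hAS₁, hS₁card]
      omega
    · rw [Finset.card_sdiff_of_subset (Finset.subset_univ _), Finset.card_univ, hcard,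
        Finset.card_union_of_disjoint hAS₁, hS₁card]
      omega
    · refine le_trans (main_count G c hc U₁ U₂ hdisj huniv _ _ Finset.disjoint_sdiff ?_ ?_) hb₁
      · intro v hv
        rw [Finset.mem_sdiff] at hv
        apply hexU₂
        intro h3'
        exact hv.2 (Finset.mem_union_left _ (Finset.mem_filter.2 ⟨Finset.mem_univ _, h3'⟩))
      · intro v hv hex
        have hvS₁ : v ∈ S₁ := by
          rcases Finset.mem_union.1 hv with h | h
          · exact absurd (Finset.mem_filter.1 h).2 (hnotsplit v hex)
          · exact h
        exact (Finset.mem_filter.1 (hS₁P hvS₁)).2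
  · have hPS : P ⊆ S := Finset.filter_subset _ _
    have hbr' : S.card - (n - A.card) ≤ (S \ P).card := by
      rw [Finset.card_sdiff_of_subset hPS]
      omega
    obtain ⟨S₂, hS₂sub, hS₂card⟩ := Finset.exists_subset_card_eq hbr'
    have hS₂S : S₂ ⊆ S := hS₂sub.trans (Finset.sdiff_subset)
    have hS₁card : (S \ S₂).card = n - A.card := by
      rw [Finset.card_sdiff_of_subset hS₂S, hS₂card]
      omega
    have hAS₁ : Disjoint A (S \ S₂) := by
      rw [Finset.disjoint_left]
      intro v hvA hvS₁
      exact ((Finset.mem_filter.1 ((Finset.sdiff_subset) hvS₁)).2.2)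
        ((Finset.mem_filter.1 hvA).2)
    refine ⟨A ∪ (S \ S₂), Finset.univ \ (A ∪ (S \ S₂)), Finset.disjoint_sdiff,
      Finset.union_sdiff_of_subset (Finset.subset_univ _), ?_, ?_, ?_⟩
    · rw [Finset.card_union_of_disjoint hAS₁, hS₁card]
      omega
    · rw [Finset.card_sdiff_of_subset (Finset.subset_univ _), Finset.card_univ, hcard,
        Finset.card_union_of_disjoint hAS₁, hS₁card]
      omega
    · rw [crossSize_comm]
      refine le_trans (main_count G c hc U₂ U₁ hdisj.symm (by rw [Finset.union_comm]; exact huniv)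
        _ _ Finset.disjoint_sdiff.symm ?_ ?_) hb₂
      · intro v hv
        apply hexU₁
        rcases Finset.mem_union.1 hv with h | h
        · rw [(Finset.mem_filter.1 h).2]; omega
        · exact (Finset.mem_filter.1 ((Finset.sdiff_subset) h)).2.1
      · intro v hv hex
        rw [Finset.mem_sdiff] at hv
        have hva : a v ≠ 0 := hnotfull v hex
        have hva3 : a v ≠ 3 := by
          intro h3'
          exact hv.2 (Finset.mem_union_left _ (Finset.mem_filter.2 ⟨Finset.mem_univ _, h3'⟩))
        have hvS : v ∈ S := Finset.mem_filter.2 ⟨Finset.mem_univ _, hva, hva3⟩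
        have hvS₂ : v ∈ S₂ := by
          by_contra h
          exact hv.2 (Finset.mem_union_right _ (Finset.mem_sdiff.2 ⟨hvS, h⟩))
        have hvnP : v ∉ P := (Finset.mem_sdiff.1 (hS₂sub hvS₂)).2
        have hN2 : ¬ (N₂ v ≤ a v) := by
          intro h
          exact hvnP (Finset.mem_filter.2 ⟨hvS, h⟩)
        have h1 := hdeg v
        have h3 := ha3 v
        have hN1e : (Finset.univ.filter fun z => G.Adj v z ∧ (z, c z v) ∈ U₁).card = N₁ v := rfl
        rw [haU₂ v, hN1e]
        omega
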